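/- Let $Q_1, Q_2$ be two quadratic forms in a polynomial ring over a field such that $Q_1$ and $Q_2$ are not scalar multiples of each other, and suppose there exist linear forms $L_1, L_2$ with $L_1 Q_1 = L_2 Q_2$ and $L_1 \neq 0$. Then there exists a linear form $L_3$ such that $Q_1 = L_2 L_3$ and $Q_2 = L_1 L_3$. -/

import Mathlib

/-!
A nonzero linear form is irreducible, hence prime, so `L₁` divides `L₂` or `Q₂`. If `L₁ ∣ L₂`,
then `L₂ = c L₁` for a scalar `c`, and cancelling `L₁` from the syzygy gives `Q₁ = c Q₂`, which is
excluded. Hence `Q₂ = L₁ L₃`, where `L₃` is linear because taking homogeneous components commutes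
with multiplication by the homogeneous `L₁`; cancelling `L₁` from the syzygy gives `Q₁ = L₂ L₃`.
-/

open MvPolynomial

namespace MvPolynomial

variable {σ R : Type*}

attribute [local instance] MvPolynomial.gradedAlgebra in
theorem homogeneousComponent_add_mul_of_isHomogeneous_left [CommSemiring R]
    {φ ψ : MvPolynomial σ R} {i : ℕ} (hφ : φ.IsHomogeneous i) (m : ℕ) :
    homogeneousComponent (i + m) (φ * ψ) = φ * homogeneousComponent m ψ := by
  have h := DirectSum.coe_decompose_mul_of_left_mem_of_le (homogeneousSubmodule σ R)
    (b := ψ) ((mem_homogeneousSubmodule i φ).mpr hφ) (Nat.le_add_right i m)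
  rw [Nat.add_sub_cancel_left] at h
  rw [← decomposition.decompose'_apply, ← decomposition.decompose'_apply]
  exact h

theorem IsHomogeneous.of_mul_left [CommRing R] [IsDomain R] {φ ψ : MvPolynomial σ R} {i m : ℕ}
    (hφ : φ.IsHomogeneous i) (hφ0 : φ ≠ 0) (h : (φ * ψ).IsHomogeneous (i + m)) :
    ψ.IsHomogeneous m := by
  have hψ : homogeneousComponent m ψ = ψ := by
    apply mul_left_cancel₀ hφ0
    rw [← homogeneousComponent_add_mul_of_isHomogeneous_left hφ, homogeneousComponent_eq_self h]
  exact hψ ▸ homogeneousComponent_isHomogeneous m ψ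

theorem IsHomogeneous.exists_eq_C_mul_of_dvd [CommRing R] [IsDomain R] {φ ψ : MvPolynomial σ R}
    {i : ℕ} (hφ : φ.IsHomogeneous i) (hφ0 : φ ≠ 0) (hψ : ψ.IsHomogeneous i) (hdvd : φ ∣ ψ) :
    ∃ c : R, ψ = C c * φ := by
  obtain ⟨w, rfl⟩ := hdvd
  have hw : w.totalDegree = 0 :=
    (totalDegree_zero_iff_isHomogeneous σ).mpr (hφ.of_mul_left hφ0 hψ)
  exact ⟨w.coeff 0, by rw [mul_comm, ← totalDegree_eq_zero_iff_eq_C.mp hw]⟩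

theorem irreducible_of_totalDegree_eq_one_of_field {K : Type*} [Field K] {p : MvPolynomial σ K}
    (hp : p.totalDegree = 1) : Irreducible p := by
  have hp0 : p ≠ 0 := by
    rintro rfl
    simp at hp
  obtain ⟨d, hd⟩ := exists_coeff_ne_zero hp0
  refine irreducible_of_totalDegree_eq_one hp fun x hx => isUnit_iff_ne_zero.mpr ?_
  rintro rfl
  exact hd (zero_dvd_iff.mp (hx d))

end MvPolynomial

theorem quadrics_with_linear_syzygy_factor_general
    {k : Type*} [Field k] {n : ℕ}
    (Q1 Q2 L1 L2 : MvPolynomial (Fin n) k)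
    (hQ2 : Q2.IsHomogeneous 2)
    (hL1 : L1.IsHomogeneous 1) (hL2 : L2.IsHomogeneous 1)
    (hns1 : ∀ c : k, Q1 ≠ c • Q2)
    (hL1ne : L1 ≠ 0)
    (hsyz : L1 * Q1 = L2 * Q2) :
    ∃ L3 : MvPolynomial (Fin n) k, L3.IsHomogeneous 1 ∧ Q1 = L2 * L3 ∧ Q2 = L1 * L3 := by
  have hL1prime : Prime L1 := 
    (irreducible_of_totalDegree_eq_one_of_field (hL1.totalDegree hL1ne)).prime
  rcases hL1prime.dvd_or_dvd ⟨Q1, hsyz.symm⟩ with hdvdL2 | ⟨L3, hL3⟩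
  · obtain ⟨c, hc⟩ := hL1.exists_eq_C_mul_of_dvd hL1ne hL2 hdvdL2
    refine absurd (mul_left_cancel₀ hL1ne ?_) (hns1 c)
    rw [smul_eq_C_mul, hsyz, hc]
    ring
  · refine ⟨L3, hL1.of_mul_left hL1ne (hL3 ▸ hQ2), mul_left_cancel₀ hL1ne ?_, hL3⟩
    rw [hsyz, hL3]
    ring

/-- If two quadratic forms `Q₁, Q₂` in a polynomial ring over a field are not scalar
multiples of each other and satisfy a linear syzygy `L₁ Q₁ = L₂ Q₂` with `L₁ ≠ 0`,
then there is a linear form `L₃` with `Q₁ = L₂ L₃` and `Q₂ = L₁ L₃`. -/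
theorem quadrics_with_linear_syzygy_factor
    {k : Type*} [Field k] {n : ℕ}
    (Q1 Q2 L1 L2 : MvPolynomial (Fin n) k)
    (hQ1 : Q1.IsHomogeneous 2) (hQ2 : Q2.IsHomogeneous 2)
    (hL1 : L1.IsHomogeneous 1) (hL2 : L2.IsHomogeneous 1)
    (hns1 : ∀ c : k, Q1 ≠ c • Q2) (hns2 : ∀ c : k, Q2 ≠ c • Q1)
    (hL1ne : L1 ≠ 0)
    (hsyz : L1 * Q1 = L2 * Q2) :
    ∃ L3 : MvPolynomial (Fin n) k, L3.IsHomogeneous 1 ∧ Q1 = L2 * L3 ∧ Q2 = L1 * L3 :=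
  quadrics_with_linear_syzygy_factor_general Q1 Q2 L1 L2 hQ2 hL1 hL2 hns1 hL1ne hsyz
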